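/- Let X be a locally compact Hausdorff space and let λ be a set function from the compact subsets of X to [-∞,∞] that assumes at most one of the values ∞, -∞, is not identically ∞ or -∞, and is finitely additive on compact sets. If F, C₁, …, Cₙ are pairwise disjoint, F is closed, and each Cᵢ is compact, then λ⁺(F ⊔ C₁ ⊔ ⋯ ⊔ Cₙ) = λ⁺(F) + λ⁺(C₁) + ⋯ + λ⁺(Cₙ) and |λ|(F ⊔ C₁ ⊔ ⋯ ⊔ Cₙ) = |λ|(F) + |λ|(C₁) + ⋯ + |λ|(Cₙ). In particular, λ⁺ and |λ| are finitely additive on compact sets. -/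
import Mathlib

open Set Classical

variable {X : Type*}

/-- The positive variation on an open set: `λ⁺(U) = sup{λ(K) : K ⊆ U, K compact}`. -/
noncomputable def posVarOpen [TopologicalSpace X] (lam : Set X → EReal) (U : Set X) : EReal :=
  ⨆ (K : Set X) (_ : IsCompact K ∧ K ⊆ U), lam K

/-- The positive variation: the sup formula on open sets, and
`λ⁺(F) = inf{λ⁺(U) : F ⊆ U, U open}` on other (in particular closed) sets. -/
noncomputable def posVar [TopologicalSpace X] (lam : Set X → EReal) (A : Set X) : EReal :=
  if IsOpen A then posVarOpen lam A
  else ⨅ (U : Set X) (_ : IsOpen U ∧ A ⊆ U), posVarOpen lam U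

/-- The total variation on an open set:
`|λ|(U) = sup{∑ᵢ |λ(Kᵢ)| : K₁, …, Kₙ pairwise disjoint compact subsets of U}`. -/
noncomputable def totVarOpen [TopologicalSpace X] (lam : Set X → EReal) (U : Set X) : EReal :=
  ⨆ (n : ℕ) (K : Fin n → Set X)
    (_ : (∀ i, IsCompact (K i) ∧ K i ⊆ U) ∧ Pairwise (Function.onFun Disjoint K)),
      ∑ i, max (lam (K i)) (-(lam (K i)))

/-- The total variation: the sup formula on open sets, and
`|λ|(F) = inf{|λ|(U) : F ⊆ U, U open}` on other (in particular closed) sets. -/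
noncomputable def totVar [TopologicalSpace X] (lam : Set X → EReal) (A : Set X) : EReal :=
  if IsOpen A then totVarOpen lam A
  else ⨅ (U : Set X) (_ : IsOpen U ∧ A ⊆ U), totVarOpen lam U

/-! ### Auxiliary lemmas -/

lemma sf_abs_nonneg (a : EReal) : 0 ≤ max a (-a) := by
  rcases le_total 0 a with h | h
  · exact h.trans (le_max_left _ _)
  · exact (EReal.le_neg_of_le_neg (by simpa using h)).trans (le_max_right _ _)

lemma sf_abs_add (a b : EReal) : max (a + b) (-(a + b)) ≤ max a (-a) + max b (-b) := by
  have hb0 : ∀ x : EReal, max x (-x) ≠ ⊥ := fun x h =>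
    absurd (sf_abs_nonneg x) (by simp [h])
  rcases eq_or_ne a ⊥ with rfl | ha
  · rw [show max (⊥:EReal) (-⊥) = ⊤ by simp, EReal.top_add_of_ne_bot (hb0 b)]; exact le_top
  rcases eq_or_ne a ⊤ with rfl | ha'
  · rw [show max (⊤:EReal) (-⊤) = ⊤ by simp, EReal.top_add_of_ne_bot (hb0 b)]; exact le_top
  rcases eq_or_ne b ⊥ with rfl | hb
  · rw [show max (⊥:EReal) (-⊥) = ⊤ by simp, EReal.add_top_of_ne_bot (hb0 a)]; exact le_top
  rcases eq_or_ne b ⊤ with rfl | hb'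
  · rw [show max (⊤:EReal) (-⊤) = ⊤ by simp, EReal.add_top_of_ne_bot (hb0 a)]; exact le_top
  refine max_le (add_le_add (le_max_left _ _) (le_max_left _ _)) ?_
  rw [EReal.neg_add (Or.inl ha) (Or.inr hb)]
  exact add_le_add (le_max_right _ _) (le_max_right _ _)

section
variable [TopologicalSpace X] (lam : Set X → EReal)

lemma posVarOpen_mono {U V : Set X} (h : U ⊆ V) : posVarOpen lam U ≤ posVarOpen lam V :=
  iSup_le fun K => iSup_le fun hK => le_iSup_of_le K (le_iSup_of_le ⟨hK.1, hK.2.trans h⟩ le_rfl)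

lemma totVarOpen_mono {U V : Set X} (h : U ⊆ V) : totVarOpen lam U ≤ totVarOpen lam V :=
  iSup_le fun n => iSup_le fun K => iSup_le fun ⟨h1, h2⟩ =>
    le_iSup_of_le n (le_iSup_of_le K
      (le_iSup_of_le ⟨fun i => ⟨(h1 i).1, (h1 i).2.trans h⟩, h2⟩ le_rfl))

lemma totVarOpen_nonneg (U : Set X) : 0 ≤ totVarOpen lam U :=
  le_iSup_of_le 0 (le_iSup_of_le Fin.elim0
    (le_iSup_of_le ⟨fun i => i.elim0, fun i => i.elim0⟩ (by simp)))

variable (hadd : ∀ C K : Set X, IsCompact C → IsCompact K → Disjoint C K →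
      lam (C ∪ K) = lam C + lam K)

include hadd in
lemma sf_lam_empty (hne : ∃ K : Set X, IsCompact K ∧ lam K ≠ ⊤ ∧ lam K ≠ ⊥) : lam ∅ = 0 := by
  obtain ⟨K, hK, ht, hb⟩ := hne
  have h := hadd K ∅ hK isCompact_empty (by simp)
  rw [union_empty] at h
  lift lam K to ℝ using ⟨ht, hb⟩ with r hr
  have hbot : lam ∅ ≠ ⊥ := fun e => by
    rw [e, EReal.add_bot] at h; exact hb h
  have htop : lam ∅ ≠ ⊤ := fun e => by
    rw [e, EReal.add_top_of_ne_bot hb] at h; exact ht h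
  lift lam ∅ to ℝ using ⟨htop, hbot⟩ with s hs
  rw [← EReal.coe_add, EReal.coe_eq_coe_iff] at h
  norm_cast
  linarith

lemma posVarOpen_nonneg (h0 : lam ∅ = 0) (U : Set X) : 0 ≤ posVarOpen lam U :=
  le_iSup_of_le ∅ (le_iSup_of_le ⟨isCompact_empty, empty_subset U⟩ h0.symm.le)

lemma sf_split_compact {U V K : Set X} (hV : IsOpen V) (hd : Disjoint U V)
    (hK : IsCompact K) (hKUV : K ⊆ U ∪ V) :
    IsCompact (K ∩ U) ∧ (K ∩ U) ∪ (K ∩ V) = K ∧ Disjoint (K ∩ U) (K ∩ V) := by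
  have h1 : K ∩ U = K \ V := by
    apply Subset.antisymm
    · rintro x ⟨hxK, hxU⟩; exact ⟨hxK, fun hxV => (disjoint_left.1 hd) hxU hxV⟩
    · rintro x ⟨hxK, hxV⟩
      rcases hKUV hxK with h | h
      exacts [⟨hxK, h⟩, absurd h hxV]
  refine ⟨h1 ▸ hK.diff hV, ?_, hd.mono inter_subset_right inter_subset_right⟩
  rw [← inter_union_distrib_left, inter_eq_left]
  exact hKUV

include hadd in
lemma posVarOpen_union {U V : Set X} (hU : IsOpen U) (hV : IsOpen V)
    (hd : Disjoint U V) :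
    posVarOpen lam (U ∪ V) = posVarOpen lam U + posVarOpen lam V := by
  apply le_antisymm
  · refine iSup_le fun K => iSup_le fun ⟨hK, hKs⟩ => ?_
    obtain ⟨c1, hun, hdis⟩ := sf_split_compact hV hd hK hKs
    have c2 : IsCompact (K ∩ V) :=
      (sf_split_compact hU hd.symm hK (union_comm U V ▸ hKs)).1
    have hlam : lam K = lam (K ∩ U) + lam (K ∩ V) := by
      conv_lhs => rw [← hun]
      exact hadd _ _ c1 c2 hdis
    rw [hlam]
    exact add_le_add (le_iSup_of_le _ (le_iSup_of_le ⟨c1, inter_subset_right⟩ le_rfl))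
      (le_iSup_of_le _ (le_iSup_of_le ⟨c2, inter_subset_right⟩ le_rfl))
  · refine EReal.add_le_of_forall_lt fun x hx y hy => ?_
    obtain ⟨K, hx⟩ := lt_iSup_iff.mp hx
    obtain ⟨⟨hK, hKU⟩, hx⟩ := lt_iSup_iff.mp hx
    obtain ⟨L, hy⟩ := lt_iSup_iff.mp hy
    obtain ⟨⟨hL, hLV⟩, hy⟩ := lt_iSup_iff.mp hy
    calc x + y ≤ lam K + lam L := add_le_add hx.le hy.le
      _ = lam (K ∪ L) := (hadd K L hK hL (hd.mono hKU hLV)).symm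
      _ ≤ posVarOpen lam (U ∪ V) :=
        le_iSup_of_le (K ∪ L)
          (le_iSup_of_le ⟨hK.union hL, union_subset_union hKU hLV⟩ le_rfl)

include hadd in
lemma totVarOpen_union {U V : Set X} (hU : IsOpen U) (hV : IsOpen V) (hd : Disjoint U V) :
    totVarOpen lam (U ∪ V) = totVarOpen lam U + totVarOpen lam V := by
  apply le_antisymm
  · refine iSup_le fun n => iSup_le fun K => iSup_le fun ⟨hcs, hpw⟩ => ?_
    have c1 : ∀ i, IsCompact (K i ∩ U) :=
      fun i => (sf_split_compact hV hd (hcs i).1 (hcs i).2).1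
    have c2 : ∀ i, IsCompact (K i ∩ V) :=
      fun i => (sf_split_compact hU hd.symm (hcs i).1 (union_comm U V ▸ (hcs i).2)).1
    have key : ∀ i, max (lam (K i)) (-(lam (K i))) ≤
        max (lam (K i ∩ U)) (-(lam (K i ∩ U))) + max (lam (K i ∩ V)) (-(lam (K i ∩ V))) := by
      intro i
      obtain ⟨_, hun, hdis⟩ := sf_split_compact hV hd (hcs i).1 (hcs i).2
      have hlam : lam (K i) = lam (K i ∩ U) + lam (K i ∩ V) := by
        conv_lhs => rw [← hun]
        exact hadd _ _ (c1 i) (c2 i) hdis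
      rw [hlam]; exact sf_abs_add _ _
    calc ∑ i, max (lam (K i)) (-(lam (K i)))
        ≤ ∑ i, (max (lam (K i ∩ U)) (-(lam (K i ∩ U)))
            + max (lam (K i ∩ V)) (-(lam (K i ∩ V)))) :=
          Finset.sum_le_sum fun i _ => key i
      _ = (∑ i, max (lam (K i ∩ U)) (-(lam (K i ∩ U))))
            + ∑ i, max (lam (K i ∩ V)) (-(lam (K i ∩ V))) := Finset.sum_add_distrib
      _ ≤ totVarOpen lam U + totVarOpen lam V := add_le_add
          (le_iSup_of_le n (le_iSup_of_le (fun i => K i ∩ U)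
            (le_iSup_of_le ⟨fun i => ⟨c1 i, inter_subset_right⟩,
              fun i j hij => (hpw hij).mono inter_subset_left inter_subset_left⟩ le_rfl)))
          (le_iSup_of_le n (le_iSup_of_le (fun i => K i ∩ V)
            (le_iSup_of_le ⟨fun i => ⟨c2 i, inter_subset_right⟩,
              fun i j hij => (hpw hij).mono inter_subset_left inter_subset_left⟩ le_rfl)))
  · refine EReal.add_le_of_forall_lt fun x hx y hy => ?_
    obtain ⟨n, hx⟩ := lt_iSup_iff.mp hx
    obtain ⟨A, hx⟩ := lt_iSup_iff.mp hx
    obtain ⟨⟨hA, pwA⟩, hx⟩ := lt_iSup_iff.mp hx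
    obtain ⟨m, hy⟩ := lt_iSup_iff.mp hy
    obtain ⟨B, hy⟩ := lt_iSup_iff.mp hy
    obtain ⟨⟨hB, pwB⟩, hy⟩ := lt_iSup_iff.mp hy
    set KK : Fin (n + m) → Set X := fun i => Sum.elim A B (finSumFinEquiv.symm i) with hKK
    have hconds : ∀ i, IsCompact (KK i) ∧ KK i ⊆ U ∪ V := by
      intro i
      rcases h : finSumFinEquiv.symm i with a | b
      · simp only [hKK, h, Sum.elim_inl]
        exact ⟨(hA a).1, (hA a).2.trans subset_union_left⟩
      · simp only [hKK, h, Sum.elim_inr]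
        exact ⟨(hB b).1, (hB b).2.trans subset_union_right⟩
    have hpwK : Pairwise (Function.onFun Disjoint KK) := by
      intro i j hij
      have hne : finSumFinEquiv.symm i ≠ finSumFinEquiv.symm j :=
        fun h => hij (finSumFinEquiv.symm.injective h)
      unfold Function.onFun
      simp only [hKK]
      rcases hi : finSumFinEquiv.symm i with a | b <;>
        rcases hj : finSumFinEquiv.symm j with a' | b' <;>
        simp only [Sum.elim_inl, Sum.elim_inr]
      · exact pwA (fun h => hne (by rw [hi, hj, h]))
      · exact hd.mono (hA a).2 (hB b').2
      · exact hd.symm.mono (hB b).2 (hA a').2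
      · exact pwB (fun h => hne (by rw [hi, hj, h]))
    have hsum : ∑ i, max (lam (KK i)) (-(lam (KK i)))
        = (∑ i, max (lam (A i)) (-(lam (A i)))) + ∑ i, max (lam (B i)) (-(lam (B i))) := by
      have h1 : ∑ i, max (lam (KK i)) (-(lam (KK i)))
          = ∑ s : Fin n ⊕ Fin m, max (lam (Sum.elim A B s)) (-(lam (Sum.elim A B s))) :=
        Equiv.sum_comp finSumFinEquiv.symm
          (fun s => max (lam (Sum.elim A B s)) (-(lam (Sum.elim A B s))))
      rw [h1, Fintype.sum_sum_type]
      simp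
    calc x + y ≤ (∑ i, max (lam (A i)) (-(lam (A i))))
          + ∑ i, max (lam (B i)) (-(lam (B i))) := add_le_add hx.le hy.le
      _ = ∑ i, max (lam (KK i)) (-(lam (KK i))) := hsum.symm
      _ ≤ totVarOpen lam (U ∪ V) :=
        le_iSup_of_le (n + m) (le_iSup_of_le KK (le_iSup_of_le ⟨hconds, hpwK⟩ le_rfl))

end

lemma sf_separate [TopologicalSpace X] [LocallyCompactSpace X] [T2Space X]
    {F C : Set X} (hF : IsClosed F) (hC : IsCompact C) (hd : Disjoint F C) :
    ∃ U₀ V₀ : Set X, IsOpen U₀ ∧ IsOpen V₀ ∧ F ⊆ U₀ ∧ C ⊆ V₀ ∧ Disjoint U₀ V₀ := by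
  obtain ⟨L, hL, hCL, hLF⟩ :=
    exists_compact_between hC hF.isOpen_compl (subset_compl_iff_disjoint_left.2 hd)
  exact ⟨Lᶜ, interior L, hL.isClosed.isOpen_compl, isOpen_interior,
    subset_compl_comm.mp hLF, hCL,
    disjoint_compl_left.mono_right interior_subset⟩

lemma sf_iInf_additive [TopologicalSpace X] [LocallyCompactSpace X] [T2Space X]
    {μ : Set X → EReal}
    (hmono : ∀ {U V : Set X}, U ⊆ V → μ U ≤ μ V)
    (hnn : ∀ U : Set X, 0 ≤ μ U)
    (haddo : ∀ U V : Set X, IsOpen U → IsOpen V → Disjoint U V → μ (U ∪ V) = μ U + μ V)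
    {F C : Set X} (hF : IsClosed F) (hC : IsCompact C) (hd : Disjoint F C) :
    (⨅ (W : Set X) (_ : IsOpen W ∧ F ∪ C ⊆ W), μ W)
      = (⨅ (U : Set X) (_ : IsOpen U ∧ F ⊆ U), μ U)
        + ⨅ (V : Set X) (_ : IsOpen V ∧ C ⊆ V), μ V := by
  obtain ⟨U₀, V₀, hU₀, hV₀, hFU₀, hCV₀, hd₀⟩ := sf_separate hF hC hd
  apply le_antisymm
  · refine EReal.le_add_of_forall_gt ?_ ?_ fun x hx y hy => ?_
    · exact Or.inl (fun h => by
        simpa [h] using (le_iInf fun U => le_iInf fun hU => hnn U :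
          (0:EReal) ≤ ⨅ (U : Set X) (_ : IsOpen U ∧ F ⊆ U), μ U))
    · exact Or.inr (fun h => by
        simpa [h] using (le_iInf fun V => le_iInf fun hV => hnn V :
          (0:EReal) ≤ ⨅ (V : Set X) (_ : IsOpen V ∧ C ⊆ V), μ V))
    · obtain ⟨U, hUx⟩ := iInf_lt_iff.mp hx
      obtain ⟨⟨hUo, hFU⟩, hUx⟩ := iInf_lt_iff.mp hUx
      obtain ⟨V, hVy⟩ := iInf_lt_iff.mp hy
      obtain ⟨⟨hVo, hCV⟩, hVy⟩ := iInf_lt_iff.mp hVy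
      have hsub : F ∪ C ⊆ (U ∩ U₀) ∪ (V ∩ V₀) :=
        union_subset_union (subset_inter hFU hFU₀) (subset_inter hCV hCV₀)
      calc (⨅ (W : Set X) (_ : IsOpen W ∧ F ∪ C ⊆ W), μ W)
          ≤ μ ((U ∩ U₀) ∪ (V ∩ V₀)) :=
            iInf_le_of_le _ (iInf_le_of_le ⟨(hUo.inter hU₀).union (hVo.inter hV₀), hsub⟩ le_rfl)
        _ = μ (U ∩ U₀) + μ (V ∩ V₀) :=
            haddo _ _ (hUo.inter hU₀) (hVo.inter hV₀)
              (hd₀.mono inter_subset_right inter_subset_right)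
        _ ≤ x + y := add_le_add ((hmono inter_subset_left).trans hUx.le)
              ((hmono inter_subset_left).trans hVy.le)
  · refine le_iInf fun W => le_iInf fun ⟨hWo, hFCW⟩ => ?_
    have h1 : (⨅ (U : Set X) (_ : IsOpen U ∧ F ⊆ U), μ U) ≤ μ (W ∩ U₀) :=
      iInf_le_of_le _ (iInf_le_of_le
        ⟨hWo.inter hU₀, subset_inter ((subset_union_left).trans hFCW) hFU₀⟩ le_rfl)
    have h2 : (⨅ (V : Set X) (_ : IsOpen V ∧ C ⊆ V), μ V) ≤ μ (W ∩ V₀) :=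
      iInf_le_of_le _ (iInf_le_of_le
        ⟨hWo.inter hV₀, subset_inter ((subset_union_right).trans hFCW) hCV₀⟩ le_rfl)
    calc _ ≤ μ (W ∩ U₀) + μ (W ∩ V₀) := add_le_add h1 h2
      _ = μ ((W ∩ U₀) ∪ (W ∩ V₀)) := (haddo _ _ (hWo.inter hU₀) (hWo.inter hV₀)
          (hd₀.mono inter_subset_right inter_subset_right)).symm
      _ ≤ μ W := hmono (union_subset inter_subset_left inter_subset_left)

lemma posVar_closed [TopologicalSpace X] (lam : Set X → EReal) {F : Set X} (hF : IsClosed F) :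
    posVar lam F = ⨅ (U : Set X) (_ : IsOpen U ∧ F ⊆ U), posVarOpen lam U := by
  unfold posVar
  split_ifs with h
  · refine le_antisymm (le_iInf fun U => le_iInf fun hU => posVarOpen_mono lam hU.2) ?_
    exact iInf_le_of_le F (iInf_le_of_le ⟨h, subset_rfl⟩ le_rfl)
  · rfl

lemma totVar_closed [TopologicalSpace X] (lam : Set X → EReal) {F : Set X} (hF : IsClosed F) :
    totVar lam F = ⨅ (U : Set X) (_ : IsOpen U ∧ F ⊆ U), totVarOpen lam U := by
  unfold totVar
  split_ifs with h
  · refine le_antisymm (le_iInf fun U => le_iInf fun hU => totVarOpen_mono lam hU.2) ?_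
    exact iInf_le_of_le F (iInf_le_of_le ⟨h, subset_rfl⟩ le_rfl)
  · rfl

lemma sf_two_set [TopologicalSpace X] [LocallyCompactSpace X] [T2Space X]
    (lam : Set X → EReal)
    (hadd : ∀ C K : Set X, IsCompact C → IsCompact K → Disjoint C K →
      lam (C ∪ K) = lam C + lam K)
    (hne : ∃ K : Set X, IsCompact K ∧ lam K ≠ ⊤ ∧ lam K ≠ ⊥)
    {F C : Set X} (hF : IsClosed F) (hC : IsCompact C) (hd : Disjoint F C) :
    posVar lam (F ∪ C) = posVar lam F + posVar lam C ∧
    totVar lam (F ∪ C) = totVar lam F + totVar lam C := by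
  have h0 := sf_lam_empty lam hadd hne
  constructor
  · rw [posVar_closed lam (hF.union hC.isClosed), posVar_closed lam hF,
      posVar_closed lam hC.isClosed]
    exact sf_iInf_additive (fun {U V} h => posVarOpen_mono lam h)
      (posVarOpen_nonneg lam h0)
      (fun U V hU hV hd' => posVarOpen_union lam hadd hU hV hd') hF hC hd
  · rw [totVar_closed lam (hF.union hC.isClosed), totVar_closed lam hF,
      totVar_closed lam hC.isClosed]
    exact sf_iInf_additive (fun {U V} h => totVarOpen_mono lam h)
      (totVarOpen_nonneg lam)
      (fun U V hU hV hd' => totVarOpen_union lam hadd hU hV hd') hF hC hd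

/-- Lemma 2.2 (s8): if `F, C₁, …, Cₙ` are pairwise disjoint, `F` closed and each `Cᵢ` compact,
then `λ⁺(F ⊔ C₁ ⊔ ⋯ ⊔ Cₙ) = λ⁺(F) + ∑ᵢ λ⁺(Cᵢ)` and `|λ|(F ⊔ C₁ ⊔ ⋯ ⊔ Cₙ) = |λ|(F) + ∑ᵢ |λ|(Cᵢ)`.
In particular, `λ⁺` and `|λ|` are finitely additive on compact sets. -/
theorem posVar_totVar_additive_closed_compact
    [TopologicalSpace X] [LocallyCompactSpace X] [T2Space X]
    (lam : Set X → EReal)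
    (hadd : ∀ C K : Set X, IsCompact C → IsCompact K → Disjoint C K →
      lam (C ∪ K) = lam C + lam K)
    (hone : (∀ K : Set X, IsCompact K → lam K ≠ ⊤) ∨ (∀ K : Set X, IsCompact K → lam K ≠ ⊥))
    (hne : ∃ K : Set X, IsCompact K ∧ lam K ≠ ⊤ ∧ lam K ≠ ⊥) :
    (∀ (F : Set X) (n : ℕ) (C : Fin n → Set X), IsClosed F → (∀ i, IsCompact (C i)) →
      Pairwise (Function.onFun Disjoint C) → (∀ i, Disjoint F (C i)) →
      posVar lam (F ∪ ⋃ i, C i) = posVar lam F + ∑ i, posVar lam (C i) ∧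
      totVar lam (F ∪ ⋃ i, C i) = totVar lam F + ∑ i, totVar lam (C i)) ∧
    (∀ C K : Set X, IsCompact C → IsCompact K → Disjoint C K →
      posVar lam (C ∪ K) = posVar lam C + posVar lam K ∧
      totVar lam (C ∪ K) = totVar lam C + totVar lam K) := by
  have main : ∀ (n : ℕ) (F : Set X) (C : Fin n → Set X), IsClosed F → (∀ i, IsCompact (C i)) →
      Pairwise (Function.onFun Disjoint C) → (∀ i, Disjoint F (C i)) →
      posVar lam (F ∪ ⋃ i, C i) = posVar lam F + ∑ i, posVar lam (C i) ∧
      totVar lam (F ∪ ⋃ i, C i) = totVar lam F + ∑ i, totVar lam (C i) := by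
    intro n
    induction n with
    | zero =>
      intro F C hF _ _ _
      simp
    | succ n ih =>
      intro F C hF hCcpt hCpw hFC
      have hUn : (⋃ i, C i) = (⋃ i : Fin n, C i.castSucc) ∪ C (Fin.last n) := by
        ext x
        simp only [mem_iUnion, mem_union]
        constructor
        · rintro ⟨i, hi⟩
          exact Fin.lastCases (motive := fun i => x ∈ C i → ((∃ j : Fin n, x ∈ C j.castSucc)
            ∨ x ∈ C (Fin.last n))) (fun h => Or.inr h) (fun j h => Or.inl ⟨j, h⟩) i hi
        · rintro (⟨j, hj⟩ | h)
          exacts [⟨j.castSucc, hj⟩, ⟨Fin.last n, h⟩]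
      set F' : Set X := F ∪ ⋃ i : Fin n, C i.castSucc with hF'def
      have hF' : IsClosed F' := hF.union ((isCompact_iUnion fun i => hCcpt _).isClosed)
      have hd' : Disjoint F' (C (Fin.last n)) := by
        refine disjoint_union_left.2 ⟨hFC _, ?_⟩
        rw [disjoint_iUnion_left]
        exact fun i => hCpw (Fin.castSucc_lt_last i).ne
      obtain ⟨hpos, htot⟩ := ih F (fun i => C i.castSucc) hF (fun i => hCcpt _)
        (fun i j hij => hCpw ((Fin.castSucc_injective n).ne hij))
        (fun i => hFC _)
      obtain ⟨hpos2, htot2⟩ := sf_two_set lam hadd hne hF' (hCcpt (Fin.last n)) hd'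
      have hre : F ∪ ⋃ i, C i = F' ∪ C (Fin.last n) := by
        rw [hUn, hF'def, union_assoc]
      constructor
      · rw [hre, hpos2, hpos, Fin.sum_univ_castSucc, add_assoc]
      · rw [hre, htot2, htot, Fin.sum_univ_castSucc, add_assoc]
  refine ⟨fun F n C hF h1 h2 h3 => main n F C hF h1 h2 h3, fun C K hC hK hd => ?_⟩
  have := main 1 C (fun _ => K) hC.isClosed (fun _ => hK)
    (Subsingleton.pairwise) (fun _ => hd)
  simpa [iUnion_const] using this
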